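/- arXiv:1905.00074 — 2 statements merged into one kernel-verified Lean document; each statement's English description precedes it below -/
import Mathlib

section
/- (Generalized Max Noether inequality) Let n ≥ 2 and let d, m₁, …, m_s be integers with d ≥ mᵢ ≥ 0 for all i. Suppose (n+1)d − Σᵢ mᵢ = c + 2 and (n−1)d² − Σᵢ mᵢ² = c + e for integers c, e with −2 ≤ c ≤ 1 and −2 ≤ e ≤ 1; if d = 1 additionally assume (n−1)d² − Σᵢ mᵢ² < 0. Then there exist n+1 distinct indices i₁ < ⋯ < i_{n+1} in {1,…,s} with m_{i₁} + ⋯ + m_{i_{n+1}} > (n−1)d. -/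
open Finset

/-!
Let `T` index `n + 1` largest multiplicities and `t` the least of them. The pointwise bounds
`mᵢ² ≤ (d + t) mᵢ - d t` on `T` and `mᵢ² ≤ t mᵢ` off `T` give
`∑ mᵢ² ≤ d ∑_T mᵢ + t (∑ mᵢ - (n + 1) d)`. If `∑_T mᵢ ≤ (n - 1) d`, the two numerical identities
turn this into `t (c + 2) ≤ c + e`. On the other hand `c + 3 ≤ 2d` (for `d = 1` this is where
`⟨D, D⟩ < 0` enters), so the multiplicities outside `T` sum to at least `1`; hence `t ≥ 1` and
`e ≥ 2`, a contradiction.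
-/

theorem exists_card_eq_forall_le_of_notMem {ι α : Type*} [Fintype ι] [DecidableEq ι]
    [LinearOrder α] (f : ι → α) {k : ℕ} (hk : k ≤ Fintype.card ι) :
    ∃ T : Finset ι, T.card = k ∧ ∀ i ∈ T, ∀ j ∉ T, f j ≤ f i := by
  induction k with
  | zero => exact ⟨∅, rfl, by simp⟩
  | succ k ih =>
    obtain ⟨T, hcard, htop⟩ := ih (by omega)
    have hne : Tᶜ.Nonempty := by rw [← card_pos, card_compl]; omega
    obtain ⟨a, ha, hmax⟩ := Tᶜ.exists_max_image f hne
    rw [mem_compl] at ha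
    refine ⟨insert a T, by rw [card_insert_of_notMem ha, hcard], fun i hi j hj => ?_⟩
    rw [mem_insert, not_or] at hj
    rcases mem_insert.mp hi with rfl | hi
    · exact hmax j (mem_compl.mpr hj.2)
    · exact htop i hi j hj.2

section OrderedRing

variable {ι R : Type*} [Fintype ι] [CommRing R] [LinearOrder R] [IsStrictOrderedRing R]
  {m : ι → R} {d : R}

theorem sum_sq_le_mul_sum (hm0 : ∀ i, 0 ≤ m i) (hmd : ∀ i, m i ≤ d) :
    ∑ i, m i ^ 2 ≤ d * ∑ i, m i := by
  rw [mul_sum]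
  exact sum_le_sum fun i _ => by nlinarith [hm0 i, hmd i]

theorem sum_sq_le_of_threshold [DecidableEq ι] (T : Finset ι) {t : R}
    (hm0 : ∀ i, 0 ≤ m i) (hmd : ∀ i, m i ≤ d)
    (hT : ∀ i ∈ T, t ≤ m i) (hTc : ∀ i ∉ T, m i ≤ t) :
    ∑ i, m i ^ 2 ≤ d * ∑ i ∈ T, m i + t * (∑ i, m i - T.card * d) := by
  have hin : ∑ i ∈ T, m i ^ 2 ≤ ∑ i ∈ T, ((d + t) * m i - d * t) :=
    sum_le_sum fun i hi => by nlinarith [hmd i, hT i hi]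
  have hout : ∑ i ∈ Tᶜ, m i ^ 2 ≤ ∑ i ∈ Tᶜ, t * m i :=
    sum_le_sum fun i hi => by nlinarith [hm0 i, hTc i (mem_compl.mp hi)]
  rw [← sum_add_sum_compl T (fun i => m i ^ 2), ← sum_add_sum_compl T m]
  rw [sum_sub_distrib, ← mul_sum, sum_const, nsmul_eq_mul] at hin
  rw [← mul_sum] at hout
  linear_combination hin + hout

end OrderedRing

theorem generalized_noether_inequality_general (n s : ℕ)
    (d c e : ℤ) (m : Fin s → ℤ)
    (hm0 : ∀ i, 0 ≤ m i) (hmd : ∀ i, m i ≤ d)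
    (hadeg : ((n : ℤ) + 1) * d - ∑ i, m i = c + 2)
    (hself : ((n : ℤ) - 1) * d ^ 2 - ∑ i, (m i) ^ 2 = c + e)
    (hc : -2 ≤ c) (hc' : c ≤ 1) (he' : e ≤ 1)
    (hd1 : d = 1 → ((n : ℤ) - 1) * d ^ 2 - ∑ i, (m i) ^ 2 < 0) :
    ∃ T : Finset (Fin s), T.card = min (n + 1) s ∧
      ((n : ℤ) - 1) * d < ∑ i ∈ T, m i := by
  have hd : 1 ≤ d := by
    have hsum : 0 ≤ ∑ i, m i := sum_nonneg fun i _ => hm0 i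
    obtain rfl | hpos := (show 0 ≤ d by nlinarith).eq_or_lt
    · have hzero : ∀ i, m i = 0 := fun i => le_antisymm (hmd i) (hm0 i)
      simp [hzero] at hadeg hself
      omega
    · exact hpos
  have hK : c + 3 ≤ 2 * d := by
    obtain rfl | hd2 := hd.eq_or_lt
    · linarith [sum_sq_le_mul_sum hm0 hmd, hd1 rfl]
    · omega
  rcases le_or_gt s (n + 1) with hs | hs
  · exact ⟨univ, by simp [hs], by linarith⟩
  obtain ⟨T, hTcard, htop⟩ :=
    exists_card_eq_forall_le_of_notMem m (k := n + 1) (by simpa using hs.le)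
  refine ⟨T, by omega, ?_⟩
  by_contra! hT
  obtain ⟨j, hj, hmj⟩ : ∃ j ∈ Tᶜ, 0 < m j := by
    refine exists_lt_of_sum_lt (f := fun _ => 0) ?_
    rw [sum_const_zero]
    linarith [sum_add_sum_compl T m]
  obtain ⟨i₀, hi₀, hmin⟩ := T.exists_min_image m (card_pos.mp (by omega))
  have ht : 1 ≤ m i₀ := hmj.trans_le (htop i₀ hi₀ j (mem_compl.mp hj))
  have hsq := sum_sq_le_of_threshold T hm0 hmd hmin (htop i₀ hi₀)
  rw [hTcard] at hsq
  push_cast at hsq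
  have hmass : m i₀ * (c + 2) ≤ c + e := by
    nlinarith [mul_le_mul_of_nonneg_left hT (by omega : (0 : ℤ) ≤ d)]
  linarith [mul_le_mul_of_nonneg_right ht (by omega : (0 : ℤ) ≤ c + 2)]

/-- Generalized Max Noether inequality: under the numerical hypotheses
`adeg D = c + 2` and `⟨D,D⟩ = c + e` with `-2 ≤ c, e ≤ 1`, `d ≥ mᵢ ≥ 0`
(and `⟨D,D⟩ < 0` if `d = 1`), there exist `n+1` distinct indices (or all `s`
indices, if `s < n+1`) whose multiplicities sum to more than `(n-1)d`. -/
theorem generalized_noether_inequality (n s : ℕ) (hn : 2 ≤ n)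
    (d c e : ℤ) (m : Fin s → ℤ)
    (hm0 : ∀ i, 0 ≤ m i) (hmd : ∀ i, m i ≤ d)
    (hadeg : ((n : ℤ) + 1) * d - ∑ i, m i = c + 2)
    (hself : ((n : ℤ) - 1) * d ^ 2 - ∑ i, (m i) ^ 2 = c + e)
    (hc : -2 ≤ c) (hc' : c ≤ 1) (he : -2 ≤ e) (he' : e ≤ 1)
    (hd1 : d = 1 → ((n : ℤ) - 1) * d ^ 2 - ∑ i, (m i) ^ 2 < 0) :
    ∃ T : Finset (Fin s), T.card = min (n + 1) s ∧
      ((n : ℤ) - 1) * d < ∑ i ∈ T, m i :=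
  generalized_noether_inequality_general n s d c e m hm0 hmd hadeg hself hc hc' he' hd1
end

section
/- The numerical (−1)-class conditions are Cremona-invariant: if D = dH − Σ mᵢEᵢ satisfies (n−1)d² − Σ mᵢ² = −1 and (n+1)d − Σ mᵢ = 1, then Cr(D) satisfies the same two conditions. -/
open Finset

/-- A divisor class `dH - Σ mᵢ Eᵢ` on `X_{n,s}` is represented by the pair `(d, m)`. -/
abbrev PicClass (s : ℕ) := ℤ × (Fin s → ℤ)

/-- Dolgachev–Mukai pairing: `⟨H,H⟩ = n-1`, `⟨H,Eᵢ⟩ = 0`, `⟨Eᵢ,Eⱼ⟩ = -δᵢⱼ`. -/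
def dmPair (n s : ℕ) (D F : PicClass s) : ℤ :=
  ((n : ℤ) - 1) * D.1 * F.1 - ∑ i, D.2 i * F.2 i

/-- The Cremona coefficient `k = m₁ + ⋯ + m_{n+1} - (n-1)d`. -/
def crK (n s : ℕ) (D : PicClass s) : ℤ :=
  (∑ i ∈ Finset.univ.filter (fun i : Fin s => i.val < n + 1), D.2 i) - ((n : ℤ) - 1) * D.1

/-- The standard Cremona transformation on `Pic(X_{n,s})`. -/
def cremona (n s : ℕ) (D : PicClass s) : PicClass s :=
  (D.1 - crK n s D, fun i => if i.val < n + 1 then D.2 i - crK n s D else D.2 i)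

/-- Anticanonical degree `adeg(D) = (n+1)d - Σ mᵢ`. -/
def adeg (n s : ℕ) (D : PicClass s) : ℤ :=
  ((n : ℤ) + 1) * D.1 - ∑ i, D.2 i

/-- The canonical class `K = -(n+1)H + (n-1)ΣEᵢ`, written as `dH - Σ mᵢEᵢ`. -/
def canonicalClass (n s : ℕ) : PicClass s :=
  (-((n : ℤ) + 1), fun _ => -((n : ℤ) - 1))

/-!
The Cremona transformation is an isometry of the Dolgachev–Mukai pairing and preserves the
anticanonical degree. Both come down to one computation: on the `n + 1` base points the
multiplicities drop by `k`, and their sum is `k + (n - 1) d` by the definition of `k`, so in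
`(n - 1)(d - k)(e - k') - Σ (mᵢ - k)(fᵢ - k')` every term containing `k` cancels.
-/

theorem Finset.sum_sub_mul_sub {ι R : Type*} [CommRing R] (T : Finset ι) (a b : ι → R) (x y : R) :
    ∑ i ∈ T, (a i - x) * (b i - y)
      = ∑ i ∈ T, a i * b i - y * ∑ i ∈ T, a i - x * ∑ i ∈ T, b i + #T * x * y := by
  simp only [sub_mul, mul_sub, sum_sub_distrib, sum_const, nsmul_eq_mul, ← mul_sum, ← sum_mul]
  ring

section Cremona

variable {n s : ℕ}

variable (n s) in
def cremonaSupport : Finset (Fin s) := {i | i.val < n + 1}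

theorem mem_cremonaSupport {i : Fin s} : i ∈ cremonaSupport n s ↔ i.val < n + 1 := by
  simp [cremonaSupport]

theorem card_cremonaSupport (hs : n + 1 ≤ s) : #(cremonaSupport n s) = n + 1 := by
  rw [cremonaSupport, Fin.card_filter_val_lt, min_eq_right hs]

theorem sum_cremonaSupport_snd (D : PicClass s) :
    ∑ i ∈ cremonaSupport n s, D.2 i = crK n s D + ((n : ℤ) - 1) * D.1 := by
  rw [crK, cremonaSupport]; ring

theorem cremona_snd_of_mem (D : PicClass s) {i : Fin s} (hi : i ∈ cremonaSupport n s) :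
    (cremona n s D).2 i = D.2 i - crK n s D :=
  if_pos (mem_cremonaSupport.mp hi)

theorem cremona_snd_of_notMem (D : PicClass s) {i : Fin s} (hi : i ∉ cremonaSupport n s) :
    (cremona n s D).2 i = D.2 i :=
  if_neg (mem_cremonaSupport.not.mp hi)

theorem sum_cremona_snd (hs : n + 1 ≤ s) (D : PicClass s) :
    ∑ i, (cremona n s D).2 i = ∑ i, D.2 i - ((n : ℤ) + 1) * crK n s D := by
  rw [← sum_add_sum_compl (cremonaSupport n s), ← sum_add_sum_compl (cremonaSupport n s) D.2,
    sum_congr rfl fun i hi => cremona_snd_of_mem D hi,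
    sum_congr rfl fun i hi => cremona_snd_of_notMem D (mem_compl.mp hi),
    sum_sub_distrib, sum_const, card_cremonaSupport hs, nsmul_eq_mul]
  push_cast
  ring

theorem sum_cremona_snd_mul (hs : n + 1 ≤ s) (D F : PicClass s) :
    ∑ i, (cremona n s D).2 i * (cremona n s F).2 i
      = ∑ i, D.2 i * F.2 i - crK n s F * ∑ i ∈ cremonaSupport n s, D.2 i
        - crK n s D * ∑ i ∈ cremonaSupport n s, F.2 i
        + ((n : ℤ) + 1) * crK n s D * crK n s F := by
  have on_support : ∑ i ∈ cremonaSupport n s, (cremona n s D).2 i * (cremona n s F).2 i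
      = ∑ i ∈ cremonaSupport n s, (D.2 i - crK n s D) * (F.2 i - crK n s F) :=
    sum_congr rfl fun i hi => by rw [cremona_snd_of_mem D hi, cremona_snd_of_mem F hi]
  have off_support : ∑ i ∈ (cremonaSupport n s)ᶜ, (cremona n s D).2 i * (cremona n s F).2 i
      = ∑ i ∈ (cremonaSupport n s)ᶜ, D.2 i * F.2 i :=
    sum_congr rfl fun i hi => by
      rw [cremona_snd_of_notMem D (mem_compl.mp hi), cremona_snd_of_notMem F (mem_compl.mp hi)]
  rw [← sum_add_sum_compl (cremonaSupport n s),
    ← sum_add_sum_compl (cremonaSupport n s) (fun i => D.2 i * F.2 i), on_support, off_support,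
    sum_sub_mul_sub, card_cremonaSupport hs]
  push_cast
  ring

theorem dmPair_cremona (hs : n + 1 ≤ s) (D F : PicClass s) :
    dmPair n s (cremona n s D) (cremona n s F) = dmPair n s D F := by
  rw [dmPair, dmPair, sum_cremona_snd_mul hs, sum_cremonaSupport_snd, sum_cremonaSupport_snd]
  simp only [cremona]
  ring

theorem adeg_cremona (hs : n + 1 ≤ s) (D : PicClass s) :
    adeg n s (cremona n s D) = adeg n s D := by
  rw [adeg, adeg, sum_cremona_snd hs]
  simp only [cremona]
  ring

end Cremona

theorem cremona_preserves_minus_one_conditions_general (n s : ℕ) (hs : n + 1 ≤ s)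
    (D : PicClass s)
    (hself : ((n : ℤ) - 1) * D.1 ^ 2 - ∑ i, (D.2 i) ^ 2 = -1)
    (hadeg : ((n : ℤ) + 1) * D.1 - ∑ i, D.2 i = 1) :
    ((n : ℤ) - 1) * (cremona n s D).1 ^ 2 - ∑ i, ((cremona n s D).2 i) ^ 2 = -1 ∧
    ((n : ℤ) + 1) * (cremona n s D).1 - ∑ i, (cremona n s D).2 i = 1 := by
  have self_eq_dmPair (E : PicClass s) :
      ((n : ℤ) - 1) * E.1 ^ 2 - ∑ i, E.2 i ^ 2 = dmPair n s E E := by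
    simp only [dmPair, sq, mul_assoc]
  refine ⟨?_, (adeg_cremona hs D).trans hadeg⟩
  rw [self_eq_dmPair, dmPair_cremona hs, ← self_eq_dmPair, hself]

/-- The numerical `(-1)`-class conditions are invariant under the Cremona transformation. -/
theorem cremona_preserves_minus_one_conditions (n s : ℕ) (hn : 2 ≤ n) (hs : n + 1 ≤ s)
    (D : PicClass s)
    (hself : ((n : ℤ) - 1) * D.1 ^ 2 - ∑ i, (D.2 i) ^ 2 = -1)
    (hadeg : ((n : ℤ) + 1) * D.1 - ∑ i, D.2 i = 1) :
    ((n : ℤ) - 1) * (cremona n s D).1 ^ 2 - ∑ i, ((cremona n s D).2 i) ^ 2 = -1 ∧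
    ((n : ℤ) + 1) * (cremona n s D).1 - ∑ i, (cremona n s D).2 i = 1 :=
  cremona_preserves_minus_one_conditions_general n s hs D hself hadeg
end
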